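/- Let N and N' be topological manifolds of the same dimension. Let (f_n : N → N') be a sequence of open embeddings converging continuously (equivalently, uniformly on compacts, when N' is metrizable) to a continuous map f : N → N'. Suppose K = f^{-1}({p}) is a nonempty compact fibre of f which is a neighborhood retract: there is an open set Ω ⊇ K with compact closure and a retraction r : Ω → K. If moreover every neighborhood of p contains a contractible open neighborhood of p, then K is contractible. -/

import Mathlib

open Filter Topology Set

section FinneyHelpers

variable {N N' : Type*} [TopologicalSpace N] [TopologicalSpace N']

/-- Charted spaces over a first countable model are first countable. -/
theorem finney_firstCountable (E : Type*) [TopologicalSpace E]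
    [FirstCountableTopology E] {M : Type*} [TopologicalSpace M]
    [ChartedSpace E M] : FirstCountableTopology M := by
  constructor
  intro x
  rw [← (chartAt E x).symm_map_nhds_eq (mem_chart_source E x)]
  infer_instance

/-- Extend a subsequence-indexed convergent sequence to a full sequence. -/
theorem finney_extend {X : Type*} [TopologicalSpace X] {σ : ℕ → ℕ} (hσ : StrictMono σ)
    (x : ℕ → X) (a : X) (hx : Tendsto x atTop (𝓝 a)) :
    ∃ y : ℕ → X, Tendsto y atTop (𝓝 a) ∧ ∀ i, y (σ i) = x i := by
  classical
  refine ⟨fun m => if h : ∃ i, σ i = m then x h.choose else a, ?_, ?_⟩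
  · rw [tendsto_atTop']
    intro O hO
    have hev : ∀ᶠ i in atTop, x i ∈ O := hx.eventually_mem hO
    rcases eventually_atTop.mp hev with ⟨I, hI⟩
    refine ⟨σ I, fun m hm => ?_⟩
    by_cases h : ∃ i, σ i = m
    · simp only [h, dif_pos]
      apply hI
      have h2 : σ h.choose = m := h.choose_spec
      have h3 : σ I ≤ σ h.choose := by rw [h2]; exact hm
      exact (hσ.le_iff_le).mp h3
    · simp only [h, dif_neg, not_false_iff]
      exact mem_of_mem_nhds hO
  · intro i
    have h : ∃ j, σ j = σ i := ⟨i, rfl⟩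
    simp only [h, dif_pos]
    congr 1
    exact hσ.injective h.choose_spec

theorem finney_tendsto_extraction
    (f : ℕ → N → N') (F : N → N')
    (hconv : ∀ (x : ℕ → N) (a : N), Tendsto x atTop (𝓝 a) →
      Tendsto (fun m => f m (x m)) atTop (𝓝 (F a)))
    {σ : ℕ → ℕ} (hσ : StrictMono σ) {x : ℕ → N} {a : N}
    (hx : Tendsto x atTop (𝓝 a)) :
    Tendsto (fun i => f (σ i) (x i)) atTop (𝓝 (F a)) := by
  obtain ⟨y, hy, hyx⟩ := finney_extend hσ x a hx
  have h1 := (hconv y a hy).comp hσ.tendsto_atTop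
  refine h1.congr fun i => ?_
  simp [Function.comp, hyx i]

theorem finney_eventually_image_subset [FirstCountableTopology N]
    (f : ℕ → N → N') (F : N → N')
    (hconv : ∀ (x : ℕ → N) (a : N), Tendsto x atTop (𝓝 a) →
      Tendsto (fun m => f m (x m)) atTop (𝓝 (F a)))
    (p : N') (A : Set N) (hA : IsCompact A) (hFA : ∀ a ∈ A, F a = p)
    {U : Set N'} (hU : U ∈ 𝓝 p) :
    ∀ᶠ m in atTop, ∀ a ∈ A, f m a ∈ U := by
  by_contra hcon
  have hfreq : ∃ᶠ m in atTop, ∃ a ∈ A, f m a ∉ U := by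
    rw [not_eventually] at hcon
    refine hcon.mono fun m hm => ?_
    push_neg at hm
    exact hm
  obtain ⟨σ, hσ, hP⟩ := extraction_of_frequently_atTop hfreq
  choose a haA haU using hP
  obtain ⟨abar, habarA, ψ, hψ, habart⟩ := hA.isSeqCompact haA
  have hten : Tendsto (fun i => f (σ (ψ i)) (a (ψ i))) atTop (𝓝 (F abar)) :=
    finney_tendsto_extraction f F hconv (hσ.comp hψ) habart
  rw [hFA abar habarA] at hten
  have : ∀ᶠ i in atTop, f (σ (ψ i)) (a (ψ i)) ∈ U := hten.eventually_mem hU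
  rcases this.exists with ⟨i, hi⟩
  exact haU (ψ i) hi

theorem finney_eventually_avoid [FirstCountableTopology N] [FirstCountableTopology N']
    (f : ℕ → N → N') (F : N → N')
    (hconv : ∀ (x : ℕ → N) (a : N), Tendsto x atTop (𝓝 a) →
      Tendsto (fun m => f m (x m)) atTop (𝓝 (F a)))
    (p : N') (A : Set N) (hA : IsCompact A)
    (hdisj : ∀ a ∈ A, Disjoint (𝓝 (F a)) (𝓝 p)) :
    ∃ V ∈ 𝓝 p, ∀ᶠ m in atTop, ∀ a ∈ A, f m a ∉ V := by
  obtain ⟨B, hB⟩ := (𝓝 p).exists_antitone_basis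
  by_contra hcon
  push_neg at hcon
  have hfreq : ∀ j, ∃ᶠ m in atTop, ∃ a ∈ A, f m a ∈ B j := by
    intro j
    have := hcon (B j) (hB.1.mem_of_mem trivial)
    exact this
  obtain ⟨σ, hσ, hP⟩ := extraction_forall_of_frequently hfreq
  choose a haA haB using hP
  obtain ⟨abar, habarA, ψ, hψ, habart⟩ := hA.isSeqCompact haA
  have hten : Tendsto (fun i => f (σ (ψ i)) (a (ψ i))) atTop (𝓝 (F abar)) :=
    finney_tendsto_extraction f F hconv (hσ.comp hψ) habart
  obtain ⟨O, hO, V', hV', hOV'⟩ := Filter.disjoint_iff.mp (hdisj abar habarA)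
  obtain ⟨j₀, -, hj₀⟩ := hB.1.mem_iff.mp hV'
  have hev : ∀ᶠ i in atTop, f (σ (ψ i)) (a (ψ i)) ∈ O := hten.eventually_mem hO
  rcases eventually_atTop.mp hev with ⟨i₀, hi₀⟩
  set i := max i₀ j₀ with hi
  have h1 : f (σ (ψ i)) (a (ψ i)) ∈ O := hi₀ i (le_max_left _ _)
  have h2 : f (σ (ψ i)) (a (ψ i)) ∈ B (ψ i) := haB (ψ i)
  have h3 : B (ψ i) ⊆ V' :=
    subset_trans (hB.antitone (le_trans (le_max_right i₀ j₀) (hψ.le_apply))) hj₀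
  exact Set.disjoint_left.mp hOV' h1 (h3 h2)

end FinneyHelpers

open Filter Topology

/-- Variant of Finney's theorem: if open embeddings `f n` between topological
manifolds of the same dimension converge continuously to a continuous map `f`,
`K = f⁻¹ {p}` is a nonempty compact fibre which is a neighborhood retract (with
retracting neighborhood `Ω` of compact closure), and `p` admits arbitrarily
small contractible open neighborhoods, then `K` is contractible. -/
theorem stmt_11 {n : ℕ} {N N' : Type*}
    [TopologicalSpace N] [ChartedSpace (EuclideanSpace ℝ (Fin n)) N]
    [TopologicalSpace N'] [ChartedSpace (EuclideanSpace ℝ (Fin n)) N']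
    (f : ℕ → N → N') (hf : ∀ m, IsOpenEmbedding (f m))
    (F : N → N') (hF : Continuous F)
    (hconv : ∀ (x : ℕ → N) (a : N), Tendsto x atTop (𝓝 a) →
      Tendsto (fun m => f m (x m)) atTop (𝓝 (F a)))
    (p : N') (hKne : (F ⁻¹' {p}).Nonempty) (hKcpt : IsCompact (F ⁻¹' {p}))
    (Ω : Set N) (hΩopen : IsOpen Ω) (hKΩ : F ⁻¹' {p} ⊆ Ω)
    (hΩcpt : IsCompact (closure Ω))
    (r : C(Ω, (F ⁻¹' {p} : Set N)))
    (hr : ∀ x : (F ⁻¹' {p} : Set N), r ⟨x, hKΩ x.2⟩ = x)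
    (hp : ∀ V ∈ 𝓝 p, ∃ U : Set N', U ⊆ V ∧ IsOpen U ∧ p ∈ U ∧ ContractibleSpace U) :
    ContractibleSpace (F ⁻¹' {p} : Set N) := by
  classical
  haveI : FirstCountableTopology N := finney_firstCountable (EuclideanSpace ℝ (Fin n))
  haveI : FirstCountableTopology N' := finney_firstCountable (EuclideanSpace ℝ (Fin n))
  revert hKne hKcpt hKΩ r hr
  set K : Set N := F ⁻¹' {p} with hKdef
  intro hKne hKcpt hKΩ r hr
  set S : Set N' := (chartAt (EuclideanSpace ℝ (Fin n)) p).source with hSdef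
  have hSopen : IsOpen S := (chartAt (EuclideanSpace ℝ (Fin n)) p).open_source
  have hpS : p ∈ S := mem_chart_source _ p
  -- points of S are "Hausdorff-separated" from each other
  have haus : ∀ a ∈ S, ∀ b ∈ S, ¬Disjoint (𝓝 a) (𝓝 b) → a = b := by
    intro a ha b hb hnd
    set e := chartAt (EuclideanSpace ℝ (Fin n)) p with he
    have hne : NeBot (𝓝 a ⊓ 𝓝 b) := neBot_iff.mpr fun h => hnd (disjoint_iff.mpr h)
    have h1 : map e (𝓝 a ⊓ 𝓝 b) ≤ 𝓝 (e a) ⊓ 𝓝 (e b) :=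
      le_inf ((map_mono inf_le_left).trans (e.continuousAt ha))
        ((map_mono inf_le_right).trans (e.continuousAt hb))
    haveI : NeBot (map e (𝓝 a ⊓ 𝓝 b)) := map_neBot
    have h2 : NeBot (𝓝 (e a) ⊓ 𝓝 (e b)) := neBot_of_le h1
    exact e.injOn ha hb (eq_of_nhds_neBot h2)
  -- the set of points not separated from p
  set NS : Set N' := {q | ¬Disjoint (𝓝 q) (𝓝 p)} with hNSdef
  have hNScl : IsClosed NS := by
    rw [← isOpen_compl_iff, isOpen_iff_mem_nhds]
    intro q hq
    have hq' : Disjoint (𝓝 q) (𝓝 p) := not_not.mp hq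
    obtain ⟨t, ht, s, hs, hts⟩ := Filter.disjoint_iff.mp hq'
    refine mem_of_superset (interior_mem_nhds.mpr ht) fun q' hq' => ?_
    intro hq'NS
    exact hq'NS
      (Filter.disjoint_iff.mpr ⟨interior t, isOpen_interior.mem_nhds hq', s, hs,
        hts.mono_left interior_subset⟩)
  have hNSS : ∀ q ∈ NS, q ∈ S → q = p := fun q hq hqS => haus q hqS p hpS hq
  set Z : Set N := F ⁻¹' (NS ∩ Sᶜ) with hZdef
  have hZcl : IsClosed Z := (hNScl.inter hSopen.isClosed_compl).preimage hF
  have hKZ : ∀ x ∈ K, x ∉ Z := by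
    intro x hx hxZ
    have hxp : F x = p := hx
    have h2 : F x ∈ NS ∩ Sᶜ := hxZ
    rw [hxp] at h2
    exact h2.2 hpS
  set O : Set N := Ω ∩ Zᶜ with hOdef
  have hOopen : IsOpen O := hΩopen.inter hZcl.isOpen_compl
  have hKO : K ⊆ O := fun x hx => ⟨hKΩ hx, hKZ x hx⟩
  -- compact collars around points of K inside O
  have hcollar : ∀ x : K, ∃ T Q : Set N,
      IsOpen T ∧ (x : N) ∈ T ∧ T ⊆ Q ∧ IsCompact Q ∧ Q ⊆ O := by
    intro x
    set e := chartAt (EuclideanSpace ℝ (Fin n)) (x : N) with he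
    have hxsrc : (x : N) ∈ e.source := mem_chart_source _ _
    have hAopen : IsOpen (e '' (e.source ∩ O)) :=
      e.isOpen_image_of_subset_source (e.open_source.inter hOopen) inter_subset_left
    have hmem : e x ∈ e '' (e.source ∩ O) := ⟨x, ⟨hxsrc, hKO x.2⟩, rfl⟩
    obtain ⟨ε, hε, hsub⟩ :=
      (Metric.nhds_basis_closedBall.mem_iff).mp (hAopen.mem_nhds hmem)
    have hAtgt : e '' (e.source ∩ O) ⊆ e.target := by
      rintro y ⟨z, hz, rfl⟩; exact e.map_source hz.1
    refine ⟨e.symm '' Metric.ball (e x) ε, e.symm '' Metric.closedBall (e x) ε, ?_, ?_, ?_, ?_, ?_⟩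
    · refine e.symm.isOpen_image_of_subset_source Metric.isOpen_ball ?_
      rw [OpenPartialHomeomorph.symm_source]
      exact (Metric.ball_subset_closedBall.trans hsub).trans hAtgt
    · exact ⟨e x, Metric.mem_ball_self hε, e.left_inv hxsrc⟩
    · exact image_mono Metric.ball_subset_closedBall
    · exact (isCompact_closedBall _ _).image_of_continuousOn
        (e.continuousOn_symm.mono (hsub.trans hAtgt))
    · rintro y ⟨z, hz, rfl⟩
      obtain ⟨w, hw, rfl⟩ := hsub hz
      rw [e.left_inv hw.1]
      exact hw.2
  choose T Q hTopen hxT hTQ hQcpt hQO using hcollar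
  obtain ⟨t, ht⟩ := hKcpt.elim_finite_subcover (fun x : K => T x) (fun x => hTopen x)
    (fun k hk => mem_iUnion.mpr ⟨⟨k, hk⟩, hxT _⟩)
  set W : Set N := ⋃ x ∈ t, T x with hWdef
  set Qt : Set N := ⋃ x ∈ t, Q x with hQtdef
  have hWopen : IsOpen W := isOpen_biUnion fun x _ => hTopen x
  have hQtcpt : IsCompact Qt := t.finite_toSet.isCompact_biUnion fun x _ => hQcpt x
  have hWQt : W ⊆ Qt := iUnion₂_mono fun x _ => hTQ x
  have hQtO : Qt ⊆ O := iUnion₂_subset fun x _ => hQO x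
  have hKW : K ⊆ W := ht
  set C : Set N := Qt \ W with hCdef
  have hCcpt : IsCompact C := hQtcpt.diff hWopen
  have hCdisj : ∀ c ∈ C, Disjoint (𝓝 (F c)) (𝓝 p) := by
    intro c hc
    by_contra hnd
    have hcNS : F c ∈ NS := hnd
    have hcZ : c ∉ Z := (hQtO hc.1).2
    have hcS : F c ∈ S := by
      by_contra hcS
      exact hcZ ⟨hcNS, hcS⟩
    have : F c = p := hNSS _ hcNS hcS
    exact hc.2 (hKW (by simpa [hKdef] using this))
  obtain ⟨V, hV, hVav⟩ := finney_eventually_avoid f F hconv p C hCcpt hCdisj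
  obtain ⟨B, hB⟩ := (𝓝 p).exists_antitone_basis
  have hUex : ∀ j, ∃ U : Set N',
      U ⊆ V ∩ B j ∩ S ∧ IsOpen U ∧ p ∈ U ∧ ContractibleSpace U := by
    intro j
    exact hp _ (inter_mem (inter_mem hV (hB.1.mem_of_mem trivial)) (hSopen.mem_nhds hpS))
  choose U hUsub hUopen hUp hUcon using hUex
  have hPj : ∀ j, ∃ᶠ m in atTop, (∀ a ∈ K, f m a ∈ U j) ∧ (∀ c ∈ C, f m c ∉ V) := by
    intro j
    refine Eventually.frequently ?_
    exact (finney_eventually_image_subset f F hconv p K hKcpt (fun a ha => ha)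
      ((hUopen j).mem_nhds (hUp j))).and hVav
  obtain ⟨σ, hσ, hPσ⟩ := extraction_forall_of_frequently hPj
  -- key claim: for some j, U j ∩ closure (f (σ j) '' W) ⊆ f (σ j) '' W
  have hkey : ∃ j, U j ∩ closure (f (σ j) '' W) ⊆ f (σ j) '' W := by
    by_contra hcon
    push_neg at hcon
    have hstep : ∀ j, ∃ y x0, y ∈ U j ∧ x0 ∈ Qt ∧ f (σ j) x0 ∉ S ∧
        ¬Disjoint (𝓝 (f (σ j) x0)) (𝓝 y) := by
      intro j
      obtain ⟨y, hymem, hynot⟩ := Set.not_subset.mp (hcon j)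
      have hyU : y ∈ U j := hymem.1
      have hycl : ClusterPt y (𝓟 (f (σ j) '' W)) := mem_closure_iff_clusterPt.mp hymem.2
      haveI hcl : NeBot (𝓝 y ⊓ 𝓟 (f (σ j) '' W)) := hycl
      have hle : 𝓝 y ⊓ 𝓟 (f (σ j) '' W) ≤ 𝓟 (f (σ j) '' Qt) :=
        le_trans inf_le_right (principal_mono.mpr (image_mono hWQt))
      obtain ⟨q, hqmem, hq⟩ := (hQtcpt.image (hf (σ j)).continuous) hle
      haveI hq' : NeBot (𝓝 q ⊓ (𝓝 y ⊓ 𝓟 (f (σ j) '' W))) := hq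
      have hnd : ¬Disjoint (𝓝 q) (𝓝 y) := by
        intro hd
        have h5 : NeBot (𝓝 q ⊓ 𝓝 y) :=
          neBot_of_le (f := 𝓝 q ⊓ (𝓝 y ⊓ 𝓟 (f (σ j) '' W)))
            (le_inf inf_le_left (le_trans inf_le_right inf_le_left))
        exact h5.ne (disjoint_iff.mp hd)
      by_cases hqS : q ∈ S
      · exfalso
        have hyS : y ∈ S := (hUsub j hyU).2
        have hqy : q = y := haus q hqS y hyS hnd
        obtain ⟨x0, hx0Qt, hfx0⟩ := hqmem
        by_cases hx0W : x0 ∈ W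
        · exact hynot ⟨x0, hx0W, by rw [hfx0, hqy]⟩
        · refine (hPσ j).2 x0 ⟨hx0Qt, hx0W⟩ ?_
          rw [hfx0, hqy]
          exact (hUsub j hyU).1.1
      · obtain ⟨x0, hx0Qt, hfx0⟩ := hqmem
        refine ⟨y, x0, hyU, hx0Qt, ?_, ?_⟩
        · rw [hfx0]; exact hqS
        · rw [hfx0]; exact hnd
    choose y x0 hyU hx0Qt hx0S hx0nd using hstep
    obtain ⟨xbar, hxbarQt, ψ, hψ, hxt⟩ := hQtcpt.isSeqCompact hx0Qt
    have hten : Tendsto (fun i => f (σ (ψ i)) (x0 (ψ i))) atTop (𝓝 (F xbar)) :=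
      finney_tendsto_extraction f F hconv (hσ.comp hψ) hxt
    have hFS : F xbar ∈ Sᶜ :=
      hSopen.isClosed_compl.mem_of_tendsto hten (Eventually.of_forall fun i => hx0S (ψ i))
    have hFNS : F xbar ∈ NS := by
      simp only [hNSdef, mem_setOf_eq]
      intro hd
      obtain ⟨O, hO, V', hV', hOV'⟩ := Filter.disjoint_iff.mp hd
      obtain ⟨O', hO'O, hO'open, hFO'⟩ := mem_nhds_iff.mp hO
      obtain ⟨j₀, -, hj₀⟩ := hB.1.mem_iff.mp hV'
      rcases eventually_atTop.mp (hten.eventually_mem (hO'open.mem_nhds hFO')) with ⟨i₀, hi₀⟩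
      set i := max i₀ j₀ with hidef
      have h1 : f (σ (ψ i)) (x0 (ψ i)) ∈ O' := hi₀ i (le_max_left _ _)
      have hne : (O' ∩ U (ψ i)).Nonempty := by
        by_contra hemp
        refine hx0nd (ψ i) (Filter.disjoint_iff.mpr ⟨O', hO'open.mem_nhds h1, U (ψ i),
          (hUopen (ψ i)).mem_nhds (hyU (ψ i)), ?_⟩)
        exact Set.disjoint_iff_inter_eq_empty.mpr (Set.not_nonempty_iff_eq_empty.mp hemp)
      obtain ⟨z, hzO', hzU⟩ := hne
      have hzB : z ∈ B (ψ i) := (hUsub _ hzU).1.2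
      have hzV' : z ∈ V' :=
        hj₀ (hB.antitone (le_trans (le_max_right i₀ j₀) hψ.le_apply) hzB)
      exact Set.disjoint_left.mp hOV' (hO'O hzO') hzV'
    have hxbarZ : xbar ∈ Z := ⟨hFNS, hFS⟩
    exact (hQtO hxbarQt).2 hxbarZ
  obtain ⟨j, hclosed⟩ := hkey
  -- connectedness: U j ⊆ f (σ j) '' W
  have hUj : U j ⊆ f (σ j) '' W := by
    have hconn : IsPreconnected (U j) := by
      haveI := hUcon j
      exact (isConnected_iff_connectedSpace.mpr inferInstance).isPreconnected
    obtain ⟨k₀, hk₀⟩ := hKne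
    have hk₀U : f (σ j) k₀ ∈ U j := (hPσ j).1 k₀ hk₀
    by_contra hns
    rcases Set.not_subset.mp hns with ⟨y0, hy0U, hy0not⟩
    have hv : y0 ∈ (closure (f (σ j) '' W))ᶜ := fun hcl => hy0not (hclosed ⟨hy0U, hcl⟩)
    have hres := hconn (f (σ j) '' W) (closure (f (σ j) '' W))ᶜ
      ((hf _).isOpenMap W hWopen) isClosed_closure.isOpen_compl
      (fun z hz => by
        by_cases hzc : z ∈ closure (f (σ j) '' W)
        · exact Or.inl (hclosed ⟨hz, hzc⟩)
        · exact Or.inr hzc)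
      ⟨f (σ j) k₀, hk₀U, ⟨k₀, hKW hk₀, rfl⟩⟩ ⟨y0, hy0U, hv⟩
    rcases hres with ⟨z, _, hzim, hzc⟩
    exact hzc (subset_closure hzim)
  -- endgame
  set g : N → N' := f (σ j) with hgdef
  set W2 : Set N := g ⁻¹' (U j) ∩ W with hW2def
  have hW2open : IsOpen W2 := ((hUopen j).preimage (hf (σ j)).continuous).inter hWopen
  have hKW2 : K ⊆ W2 := fun k hk => ⟨(hPσ j).1 k hk, hKW hk⟩
  have hW2Ω : W2 ⊆ Ω := fun x hx => (hQtO (hWQt hx.2)).1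
  have hcont : Continuous fun w : W2 => (⟨g w.1, w.2.1⟩ : U j) :=
    Continuous.subtype_mk ((hf (σ j)).continuous.comp continuous_subtype_val) _
  have hbij : Function.Bijective fun w : W2 => (⟨g w.1, w.2.1⟩ : U j) := by
    constructor
    · intro w1 w2 h12
      exact Subtype.ext ((hf (σ j)).injective (congrArg Subtype.val h12))
    · intro u
      obtain ⟨w, hwW, hgw⟩ := hUj u.2
      refine ⟨⟨w, ⟨?_, hwW⟩⟩, Subtype.ext hgw⟩
      show g w ∈ U j
      rw [hgw]
      exact u.2
  have hopenmap : IsOpenMap fun w : W2 => (⟨g w.1, w.2.1⟩ : U j) := by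
    intro s hs
    have h1 : IsOpen (Subtype.val '' s) := hW2open.isOpenMap_subtype_val s hs
    have h2 : IsOpen (g '' (Subtype.val '' s)) := (hf (σ j)).isOpenMap _ h1
    have himg : (fun w : W2 => (⟨g w.1, w.2.1⟩ : U j)) '' s
        = Subtype.val ⁻¹' (g '' (Subtype.val '' s)) := by
      ext u
      constructor
      · rintro ⟨w, hws, rfl⟩
        exact ⟨w.1, ⟨w, hws, rfl⟩, rfl⟩
      · rintro ⟨x1, ⟨w, hws, rfl⟩, hval⟩
        exact ⟨w, hws, Subtype.ext hval⟩
    rw [himg]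
    exact h2.preimage continuous_subtype_val
  set e2 : W2 ≃ₜ U j :=
    Equiv.toHomeomorphOfContinuousOpen (Equiv.ofBijective _ hbij) hcont hopenmap with he2
  haveI hUcontr : ContractibleSpace (U j) := hUcon j
  set jincl : C(K, W2) :=
    ⟨fun k => ⟨k.1, hKW2 k.2⟩, Continuous.subtype_mk continuous_subtype_val _⟩ with hjincl
  set e2CM : C(W2, U j) := ⟨e2, e2.continuous⟩ with he2CM
  set e2invCM : C(U j, W2) := ⟨e2.symm, e2.symm.continuous⟩ with he2invCM
  have hnull : (e2CM.comp jincl).Nullhomotopic := by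
    have h := (id_nullhomotopic (U j)).comp_left (e2CM.comp jincl)
    rwa [ContinuousMap.id_comp] at h
  set ρ : C(W2, K) :=
    r.comp ⟨fun w => ⟨w.1, hW2Ω w.2⟩, Continuous.subtype_mk continuous_subtype_val _⟩ with hρ
  have hfinal : ContinuousMap.id K = ρ.comp (e2invCM.comp (e2CM.comp jincl)) := by
    ext k
    simp only [ContinuousMap.comp_apply, ContinuousMap.id_apply]
    rw [show e2invCM (e2CM (jincl k)) = jincl k from e2.symm_apply_apply _]
    simp only [hρ, hjincl, ContinuousMap.comp_apply, ContinuousMap.coe_mk]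
    exact congrArg Subtype.val (hr k).symm
  rw [contractible_iff_id_nullhomotopic]
  rw [hfinal]
  exact (hnull.comp_right e2invCM).comp_right ρ
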